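/- arXiv:1011.1484 — 4 statements merged into one kernel-verified Lean document; each statement's English description precedes it below -/
import Mathlib

section
/- With A = Λ•E* ⊗_R R[t], d(f)=t·ιₛ(f) as above, and s a Koszul-regular element of the finitely generated projective R-module E, the localized dg algebra A[t⁻¹] = Λ•E* ⊗_R R[t,t⁻¹] has cohomology H(A[t⁻¹]) ≅ (R/I)[t,t⁻¹], where I = {f(s) : f ∈ E*} is the ideal generated by the image of contraction with s. -/
open Module TensorProduct

/-- Contraction `ιₛ` against `s : E` on the exterior algebra `Λ•E*`
(the Koszul differential). -/
noncomputable def koszulContraction (R : Type) [CommRing R]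
    (E : Type) [AddCommGroup E] [Module R E] (s : E) :
    ExteriorAlgebra R (Dual R E) →ₗ[R] ExteriorAlgebra R (Dual R E) :=
  CliffordAlgebra.contractLeft (Q := (0 : QuadraticForm R (Dual R E))) (Dual.eval R E s)

/-- The differential `dL(f ⊗ p) = ιₛ(f) ⊗ t·p` of the localized dg algebra
`A[t⁻¹] = Λ•E* ⊗_R R[t,t⁻¹]`. -/
noncomputable def localizedKoszulDualDiff (R : Type) [CommRing R]
    (E : Type) [AddCommGroup E] [Module R E] (s : E) :
    TensorProduct R (ExteriorAlgebra R (Dual R E)) (LaurentPolynomial R) →ₗ[R]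
      TensorProduct R (ExteriorAlgebra R (Dual R E)) (LaurentPolynomial R) :=
  TensorProduct.map (koszulContraction R E s) (LinearMap.mulLeft R (LaurentPolynomial.T 1))

/-!
Multiplication by `t` is invertible on `Λ•E* ⊗ R[t,t⁻¹]`, so the localized differential has the
same cocycles and coboundaries as `ιₛ ⊗ id`, which under `Λ•E* ⊗ R[t,t⁻¹] ≅ ℤ →₀ Λ•E*` is `ιₛ`
applied to each coefficient. Hence it suffices that the augmentation `Λ•E* → R → R/I` identifies
`ker ιₛ / im ιₛ` with `R/I`. By Koszul-regularity a cocycle is `ιₛ w + c`, with `c ∈ R`; the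
augmentation of `ιₛ w` lies in `I`, and conversely every `c ∈ I` is a coboundary because
`ιₛ f = f(s)` for `f ∈ E*`.
-/

open LinearMap

section Cohomology

variable {R M M' Q Q' : Type*} [CommRing R] [AddCommGroup M] [Module R M]
  [AddCommGroup M'] [Module R M'] [AddCommGroup Q] [Module R Q] [AddCommGroup Q'] [Module R Q']

structure InducesCohomologyEquiv (δ : M →ₗ[R] M) (ε : M →ₗ[R] Q) : Prop where
  range_le_ker : range δ ≤ ker ε
  map_ker_eq_top : (ker δ).map ε = ⊤
  ker_inf_ker_le_range : ker δ ⊓ ker ε ≤ range δ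

namespace InducesCohomologyEquiv

variable {δ : M →ₗ[R] M} {ε : M →ₗ[R] Q}

theorem surjective_comp_subtype (h : InducesCohomologyEquiv δ ε) :
    Function.Surjective (ε ∘ₗ (ker δ).subtype) := by
  rw [← range_eq_top, range_comp, Submodule.range_subtype, h.map_ker_eq_top]

theorem exists_surjective_ker_eq (h : InducesCohomologyEquiv δ ε) :
    ∃ φ : ker δ →ₗ[R] Q, Function.Surjective φ ∧
      ker φ = (range δ).comap (ker δ).subtype := by
  refine ⟨ε ∘ₗ (ker δ).subtype, h.surjective_comp_subtype, ?_⟩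
  ext ⟨x, hx⟩
  simp only [mem_ker, comp_apply, Submodule.coe_subtype, Submodule.mem_comap]
  exact ⟨fun hεx => h.ker_inf_ker_le_range ⟨hx, hεx⟩, fun hδx => h.range_le_ker hδx⟩

theorem of_ker_eq_of_range_eq (h : InducesCohomologyEquiv δ ε) {δ' : M →ₗ[R] M}
    (hker : ker δ' = ker δ) (hrange : range δ' = range δ) : InducesCohomologyEquiv δ' ε :=
  ⟨hrange ▸ h.range_le_ker, hker ▸ h.map_ker_eq_top, hker ▸ hrange ▸ h.ker_inf_ker_le_range⟩

theorem comp_linearEquiv (h : InducesCohomologyEquiv δ ε) (g : Q ≃ₗ[R] Q') :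
    InducesCohomologyEquiv δ (g.toLinearMap ∘ₗ ε) where
  range_le_ker := by rw [LinearEquiv.ker_comp]; exact h.range_le_ker
  map_ker_eq_top := by
    rw [Submodule.map_comp, h.map_ker_eq_top, Submodule.map_top, LinearEquiv.range]
  ker_inf_ker_le_range := by rw [LinearEquiv.ker_comp]; exact h.ker_inf_ker_le_range

theorem comap_linearEquiv (h : InducesCohomologyEquiv δ ε) (e : M' ≃ₗ[R] M) {δ' : M' →ₗ[R] M'}
    (hδ : e.toLinearMap ∘ₗ δ' = δ ∘ₗ e) : InducesCohomologyEquiv δ' (ε ∘ₗ e) := by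
  have hδ' : δ' = e.symm.toLinearMap ∘ₗ δ ∘ₗ e := by
    rw [← hδ, ← comp_assoc, LinearEquiv.symm_comp, id_comp]
  have hker : ker δ' = (ker δ).comap (e : M' →ₗ[R] M) := by
    rw [hδ', LinearEquiv.ker_comp, ker_comp]
  have hrange : range δ' = (range δ).comap (e : M' →ₗ[R] M) := by
    rw [hδ', range_comp, range_comp, LinearEquiv.range, Submodule.map_top,
      Submodule.map_equiv_eq_comap_symm, LinearEquiv.symm_symm]
  refine ⟨?_, ?_, ?_⟩
  · rw [hrange, ker_comp]; exact Submodule.comap_mono h.range_le_ker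
  · rw [hker, Submodule.map_comp, Submodule.map_comap_eq_of_surjective e.surjective,
      h.map_ker_eq_top]
  · rw [hker, hrange, ker_comp, ← Submodule.comap_inf]
    exact Submodule.comap_mono h.ker_inf_ker_le_range

theorem finsuppMapRange (h : InducesCohomologyEquiv δ ε) (ι : Type*) :
    InducesCohomologyEquiv (Finsupp.mapRange.linearMap (α := ι) δ)
      (Finsupp.mapRange.linearMap ε) := by
  refine ⟨?_, ?_, ?_⟩
  · rintro _ ⟨g, rfl⟩
    ext i
    exact h.range_le_ker ⟨g i, rfl⟩
  · rw [eq_top_iff]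
    rintro q -
    obtain ⟨g, rfl⟩ := Finsupp.mapRange_surjective _ (map_zero _) h.surjective_comp_subtype q
    refine ⟨Finsupp.mapRange.linearMap (ker δ).subtype g, ?_, ?_⟩
    · ext i; exact (g i).2
    · ext i; rfl
  · rintro g ⟨hδg, hεg⟩
    change g ∈ Set.range (Finsupp.mapRange δ δ.map_zero)
    rw [Finsupp.range_mapRange]
    exact fun i => h.ker_inf_ker_le_range ⟨DFunLike.congr_fun hδg i, DFunLike.congr_fun hεg i⟩

end InducesCohomologyEquiv

end Cohomology

namespace ExteriorAlgebra

variable {R M : Type*} [CommRing R] [AddCommGroup M] [Module R M] (d : Dual R M)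

theorem algebraMapInv_contractLeft_mem_span (x : ExteriorAlgebra R M) :
    algebraMapInv (CliffordAlgebra.contractLeft (Q := 0) d x) ∈ Ideal.span (Set.range d) := by
  induction x using CliffordAlgebra.left_induction with
  | algebraMap r => simp
  | add x y hx hy => rw [map_add, map_add]; exact add_mem hx hy
  | ι_mul x m _ =>
    rw [CliffordAlgebra.contractLeft_ι_mul, map_sub, map_smul, map_mul]
    have hι : algebraMapInv (ι R m) = 0 := by simp [algebraMapInv]
    rw [hι, zero_mul, sub_zero]
    exact Ideal.mul_mem_right _ _ (Ideal.subset_span ⟨m, rfl⟩)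

theorem algebraMap_mem_range_contractLeft {c : R} (hc : c ∈ Ideal.span (Set.range d)) :
    algebraMap R (ExteriorAlgebra R M) c ∈ range (CliffordAlgebra.contractLeft (Q := 0) d) := by
  have hspan :
      (Submodule.span R (Set.range d)).map (Algebra.linearMap R (ExteriorAlgebra R M)) ≤
        range (CliffordAlgebra.contractLeft (Q := 0) d) := by
    rw [Submodule.map_span, Submodule.span_le]
    rintro _ ⟨_, ⟨m, rfl⟩, rfl⟩
    exact ⟨ι R m, by simp⟩
  exact hspan ⟨c, hc, rfl⟩

end ExteriorAlgebra

section LaurentPolynomial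

variable {R M N : Type*} [CommRing R] [AddCommGroup M] [Module R M] [AddCommGroup N] [Module R N]

variable (R M) in
noncomputable def laurentTensorEquivFinsupp : M ⊗[R] LaurentPolynomial R ≃ₗ[R] (ℤ →₀ M) :=
  LinearEquiv.lTensor M (AddMonoidAlgebra.coeffLinearEquiv R) ≪≫ₗ
    TensorProduct.finsuppScalarRight R R M ℤ

theorem laurentTensorEquivFinsupp_comp_rTensor (f : M →ₗ[R] N) :
    (laurentTensorEquivFinsupp R N).toLinearMap ∘ₗ f.rTensor (LaurentPolynomial R) =
      Finsupp.mapRange.linearMap f ∘ₗ laurentTensorEquivFinsupp R M := by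
  ext x p n
  simp [laurentTensorEquivFinsupp, apply_ite f]

end LaurentPolynomial

section Koszul

variable {R : Type} [CommRing R] {E : Type} [AddCommGroup E] [Module R E] {s : E}

theorem koszulContraction_inducesCohomologyEquiv
    (hreg : ker (koszulContraction R E s) =
      range (koszulContraction R E s) ⊔ Submodule.span R {(1 : ExteriorAlgebra R (Dual R E))}) :
    InducesCohomologyEquiv (koszulContraction R E s)
      ((Ideal.span (Set.range fun f : Dual R E => f s)).mkQ ∘ₗ
        ExteriorAlgebra.algebraMapInv.toLinearMap) where
  range_le_ker := by
    rintro _ ⟨x, rfl⟩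
    exact (Submodule.Quotient.mk_eq_zero _).mpr
      (ExteriorAlgebra.algebraMapInv_contractLeft_mem_span (Dual.eval R E s) x)
  map_ker_eq_top := by
    rw [eq_top_iff]
    rintro q -
    obtain ⟨r, rfl⟩ := Submodule.mkQ_surjective _ q
    exact ⟨algebraMap R _ r, CliffordAlgebra.contractLeft_algebraMap _ _ r, by simp⟩
  ker_inf_ker_le_range := by
    rintro x ⟨hδx, hεx⟩
    obtain ⟨_, ⟨w, rfl⟩, _, hone, rfl⟩ := Submodule.mem_sup.mp (hreg ▸ hδx)
    obtain ⟨c, rfl⟩ := Submodule.mem_span_singleton.mp hone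
    have hw := ExteriorAlgebra.algebraMapInv_contractLeft_mem_span (Dual.eval R E s) w
    have hc : c ∈ Ideal.span (Set.range fun f : Dual R E => f s) := by
      have := Submodule.sub_mem _ ((Submodule.Quotient.mk_eq_zero _).mp hεx) hw
      simpa [koszulContraction] using this
    refine add_mem (mem_range_self _ w) ?_
    rw [← Algebra.algebraMap_eq_smul_one]
    exact ExteriorAlgebra.algebraMap_mem_range_contractLeft (Dual.eval R E s) hc

theorem ker_localizedKoszulDualDiff :
    ker (localizedKoszulDualDiff R E s) =
      ker ((koszulContraction R E s).rTensor (LaurentPolynomial R)) := by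
  rw [localizedKoszulDualDiff, ← lTensor_comp_rTensor]
  exact (LinearEquiv.lTensor _
    ((LaurentPolynomial.isUnit_T 1).unit.mulLeftLinearEquiv R _)).ker_comp _

theorem range_localizedKoszulDualDiff :
    range (localizedKoszulDualDiff R E s) =
      range ((koszulContraction R E s).rTensor (LaurentPolynomial R)) := by
  rw [localizedKoszulDualDiff, ← rTensor_comp_lTensor]
  exact LinearEquiv.range_comp (LinearEquiv.lTensor _
    ((LaurentPolynomial.isUnit_T 1).unit.mulLeftLinearEquiv R _)) _

end Koszul

theorem localized_koszul_dual_cohomology_general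
    (R : Type) [CommRing R]
    (E : Type) [AddCommGroup E] [Module R E]
    (s : E)
    (hreg : LinearMap.ker (koszulContraction R E s) =
      LinearMap.range (koszulContraction R E s) ⊔
        Submodule.span R {(1 : ExteriorAlgebra R (Dual R E))}) :
    ∃ h : ↥(LinearMap.ker (localizedKoszulDualDiff R E s)) →ₗ[R]
        LaurentPolynomial (R ⧸ Ideal.span (Set.range fun f : Dual R E => f s)),
      Function.Surjective h ∧
      LinearMap.ker h =
        (LinearMap.range (localizedKoszulDualDiff R E s)).comap
          (LinearMap.ker (localizedKoszulDualDiff R E s)).subtype := by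
  have hfinsupp := (koszulContraction_inducesCohomologyEquiv hreg).finsuppMapRange ℤ
  have hlaurent := hfinsupp.comap_linearEquiv (laurentTensorEquivFinsupp R _)
    (laurentTensorEquivFinsupp_comp_rTensor _)
  exact ((hlaurent.of_ker_eq_of_range_eq ker_localizedKoszulDualDiff
    range_localizedKoszulDualDiff).comp_linearEquiv
      (AddMonoidAlgebra.coeffLinearEquiv R).symm).exists_surjective_ker_eq

/-- With `A = Λ•E* ⊗_R R[t]`, `d(f) = t·ιₛ(f)`, and `s` a Koszul-regular
element of the finitely generated projective `R`-module `E` (encoded, via the contraction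
operator `δ = ιₛ` on `Λ•E*`, by `ker δ = range δ ⊔ R·1`, i.e. the Koszul complex is exact
except in degree `0`), the localized dg algebra `A[t⁻¹] = Λ•E* ⊗_R R[t,t⁻¹]` has
cohomology `H(A[t⁻¹]) ≅ (R/I)[t,t⁻¹]` where `I = {f(s) : f ∈ E*}` is the ideal generated
by the image of contraction with `s`.  The cohomology `ker dL / range dL` is presented as
an `R`-linear surjection from the cocycles `ker dL` onto `(R/I)[t,t⁻¹]` whose kernel is
exactly the coboundaries. -/
theorem localized_koszul_dual_cohomology
    (R : Type) [CommRing R]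
    (E : Type) [AddCommGroup E] [Module R E] [Module.Finite R E] [Module.Projective R E]
    (s : E)
    (hreg : LinearMap.ker (koszulContraction R E s) =
      LinearMap.range (koszulContraction R E s) ⊔
        Submodule.span R {(1 : ExteriorAlgebra R (Dual R E))}) :
    ∃ h : ↥(LinearMap.ker (localizedKoszulDualDiff R E s)) →ₗ[R]
        LaurentPolynomial (R ⧸ Ideal.span (Set.range fun f : Dual R E => f s)),
      Function.Surjective h ∧
      LinearMap.ker h =
        (LinearMap.range (localizedKoszulDualDiff R E s)).comap
          (LinearMap.ker (localizedKoszulDualDiff R E s)).subtype :=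
  localized_koszul_dual_cohomology_general R E s hreg
end

section
/- Let T be a triangulated category, S ⊂ T a full triangulated subcategory closed under direct summands, F: T → T' an exact functor to a triangulated category T' such that F(X) ≅ 0 for all X ∈ S. Suppose G: T' → T is exact with: (i) the unit Id_T → G∘F has cone in S for every object, and (ii) the counit F∘G → Id_{T'} is an isomorphism. Then F induces an equivalence of triangulated categories T/S ≃ T'. -/
open CategoryTheory Limits Pretriangulated

/-!
Since `F` is triangulated and kills `S`, it sends a morphism with cone in `S` to a morphism
whose cone is zero, i.e. to an isomorphism; so `F` factors through the Verdier quotient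
`Q : T ⥤ T/S` as `F = Q ⋙ Φ`. The functor `G ⋙ Q` is quasi-inverse to `Φ`: the counit gives
`Φ ∘ (G ⋙ Q) = F ∘ G ≅ 𝟭`, and the unit, whose components have cones in `S` and hence become
invertible in `T/S`, gives `Q ≅ Q ⋙ Φ ⋙ G ⋙ Q`, which descends to `𝟭 ≅ (G ⋙ Q) ∘ Φ` on `T/S`.
-/

namespace CategoryTheory

/-- A variant of `Adjunction.isLocalization_leftAdjoint` in which `η` and `ε` need not satisfy
the triangle identities. -/
lemma Functor.isLocalization_of_unit_mem_of_counitIso {C D : Type*} [Category C] [Category D]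
    (F : C ⥤ D) (G : D ⥤ C) (W : MorphismProperty C) (hF : W.IsInvertedBy F)
    (η : 𝟭 C ⟶ F ⋙ G) (hη : ∀ X, W (η.app X)) (ε : G ⋙ F ≅ 𝟭 D) :
    F.IsLocalization W := by
  let Φ : W.Localization ⥤ D := Localization.lift F hF W.Q
  let fac : W.Q ⋙ Φ ≅ F := Localization.fac F hF W.Q
  have : IsIso (Functor.whiskerRight η W.Q) :=
    (NatTrans.isIso_iff_isIso_app _).2 fun X ↦ Localization.inverts W.Q W _ (hη X)
  let unitIso : 𝟭 W.Localization ≅ Φ ⋙ G ⋙ W.Q :=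
    Localization.liftNatIso W.Q W W.Q (F ⋙ G ⋙ W.Q) _ _
      (W.Q.leftUnitor.symm ≪≫ asIso (Functor.whiskerRight η W.Q) ≪≫ Functor.associator _ _ _)
  let counitIso : (G ⋙ W.Q) ⋙ Φ ≅ 𝟭 D :=
    Functor.associator _ _ _ ≪≫ Functor.isoWhiskerLeft G fac ≪≫ ε
  exact Functor.IsLocalization.of_equivalence_target W.Q W F
    (Equivalence.mk Φ (G ⋙ W.Q) unitIso counitIso) fac

lemma ObjectProperty.trW_isInvertedBy_of_isZero {C D : Type*} [Category C] [Category D]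
    [Preadditive C] [HasZeroObject C] [HasShift C ℤ] [∀ n : ℤ, (shiftFunctor C n).Additive]
    [Pretriangulated C] [Preadditive D] [HasZeroObject D] [HasShift D ℤ]
    [∀ n : ℤ, (shiftFunctor D n).Additive] [Pretriangulated D]
    (S : ObjectProperty C) (F : C ⥤ D) [F.CommShift ℤ] [F.IsTriangulated]
    (hF : ∀ X, S X → IsZero (F.obj X)) :
    S.trW.IsInvertedBy F := by
  rintro X Y f ⟨Z, g, h, hT, hZ⟩
  exact (Triangle.isZero₃_iff_isIso₁ _ (F.map_distinguished _ hT)).1 (hF Z hZ)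

end CategoryTheory

/-- Let `T` be a (pre)triangulated category, `S ⊆ T` a full triangulated
subcategory closed under direct summands (retracts), and `F : T → T'` an exact
(triangulated) functor with `F(X) ≅ 0` for all `X ∈ S`.  Suppose `G : T' → T` is exact
with a unit `η : Id_T → G∘F` whose cone at every object lies in `S`, and a counit
`ε : F∘G → Id_{T'}` which is an isomorphism.  Then `F` induces an equivalence of
triangulated categories `T/S ≃ T'`; this is stated in the standard Mathlib form:
`F` is a localization functor with respect to the class `W(S)` of morphisms whose cone
lies in `S`, i.e. `F` identifies `T'` with the Verdier quotient `T/S`. -/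
theorem verdier_quotient_equivalence
    (T : Type) [Category T] [Preadditive T] [HasZeroObject T] [HasShift T ℤ]
    [∀ n : ℤ, (shiftFunctor T n).Additive] [Pretriangulated T]
    (T' : Type) [Category T'] [Preadditive T'] [HasZeroObject T'] [HasShift T' ℤ]
    [∀ n : ℤ, (shiftFunctor T' n).Additive] [Pretriangulated T']
    (S : ObjectProperty T) [S.IsTriangulated]
    -- `S` is closed under direct summands (retracts):
    (hthick : ∀ (X Y : T) (i : X ⟶ Y) (r : Y ⟶ X), i ≫ r = 𝟙 X → S Y → S X)
    (F : T ⥤ T') [F.CommShift ℤ] [F.IsTriangulated]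
    -- `F` kills the objects of `S`:
    (hFS : ∀ X : T, S X → IsZero (F.obj X))
    (G : T' ⥤ T) [G.CommShift ℤ] [G.IsTriangulated]
    (η : 𝟭 T ⟶ F ⋙ G)
    -- (i) the cone of the unit lies in `S` for every object:
    (hη : ∀ X : T, ∃ (Z : T) (_ : S Z) (g : (F ⋙ G).obj X ⟶ Z) (h : Z ⟶ X⟦(1 : ℤ)⟧),
      Triangle.mk (η.app X) g h ∈ distTriang T)
    (ε : G ⋙ F ⟶ 𝟭 T')
    -- (ii) the counit is an isomorphism:
    (hε : IsIso ε) :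
    F.IsLocalization S.trW := by
  have hηW : ∀ X, S.trW (η.app X) := fun X ↦ by
    obtain ⟨Z, hZ, g, h, hT⟩ := hη X
    exact ⟨Z, g, h, hT, hZ⟩
  exact F.isLocalization_of_unit_mem_of_counitIso G S.trW
    (S.trW_isInvertedBy_of_isZero F hFS) η hηW (asIso ε)
end

section
/- Let R be a commutative ring, M a ℤ-graded module over the ℤ-graded ring R[t,t⁻¹] (t in degree −1). The natural multiplication map R[t,t⁻¹] ⊗_{R[t]} M_{≤0} → M, a ⊗ n ↦ a·n, is an isomorphism of R[t,t⁻¹]-modules, where M_{≤0} = ⊕_{j ≤ 0} M_j is the non-positively graded part of M, viewed as an R[t]-module. -/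
open TensorProduct

/-- An `R[t]`-module structure on any module over the Laurent polynomial ring,
by restriction of scalars along the localization map `R[t] → R[t,t⁻¹]`. -/
noncomputable instance polyModuleOfLaurentModule (R : Type) [CommRing R]
    (M : Type) [AddCommGroup M] [Module (LaurentPolynomial R) M] :
    Module (Polynomial R) M :=
  Module.compHom M (algebraMap (Polynomial R) (LaurentPolynomial R))

/-!
Since `R[t,t⁻¹]` is `R[t]` with `t` inverted, every element of `R[t,t⁻¹] ⊗_{R[t]} M_{≤0}` is a
pure tensor `t⁻ⁿ ⊗ p`; it maps to `t⁻ⁿ • p`, which vanishes only if `p` does, because `t` acts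
invertibly on `M`. A homogeneous element `x ∈ M_j` is `t^{-k} • (t^k • x)` with `k = max j 0`,
and `t^k • x ∈ M_{min j 0} ⊆ M_{≤0}`; so the homogeneous elements, which span `M`, lie in the
image.
-/

open LaurentPolynomial Polynomial

namespace LaurentPolynomial

variable {R : Type} [CommRing R]

section TensorProduct

variable {P : Type} [AddCommGroup P] [Module R[X] P]

theorem T_neg_tmul_eq_T_neg_add_tmul_X_pow_smul (n k : ℕ) (p : P) :
    (T (-n) : R[T;T⁻¹]) ⊗ₜ[R[X]] p = (T (-(n + k : ℕ)) : R[T;T⁻¹]) ⊗ₜ[R[X]] ((X ^ k : R[X]) • p) := by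
  rw [← smul_tmul, Algebra.smul_def, algebraMap_X_pow, ← T_add]
  congr 2
  push_cast
  ring

theorem exists_eq_T_neg_tmul (z : R[T;T⁻¹] ⊗[R[X]] P) :
    ∃ (n : ℕ) (p : P), z = (T (-n) : R[T;T⁻¹]) ⊗ₜ[R[X]] p := by
  induction z using TensorProduct.induction_on with
  | zero => exact ⟨0, 0, by rw [tmul_zero]⟩
  | tmul a p =>
    obtain ⟨n, f, hf⟩ := a.exists_T_pow
    refine ⟨n, f • p, ?_⟩
    rw [tmul_smul, smul_tmul', Algebra.smul_def, algebraMap_eq_toLaurent, hf, mul_assoc,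
      ← T_add, add_neg_cancel, T_zero, mul_one]
  | add x y hx hy =>
    obtain ⟨n, p, rfl⟩ := hx
    obtain ⟨m, q, rfl⟩ := hy
    refine ⟨n + m, (X ^ m : R[X]) • p + (X ^ n : R[X]) • q, ?_⟩
    rw [tmul_add, T_neg_tmul_eq_T_neg_add_tmul_X_pow_smul n m p,
      T_neg_tmul_eq_T_neg_add_tmul_X_pow_smul m n q, Nat.add_comm m n]

end TensorProduct

section Module

variable {M : Type} [AddCommGroup M] [Module R[T;T⁻¹] M]

theorem T_neg_smul_T_smul (k : ℤ) (m : M) :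
    (T (-k) : R[T;T⁻¹]) • (T k : R[T;T⁻¹]) • m = m := by
  rw [← mul_smul, ← T_add, neg_add_cancel, T_zero, one_smul]

theorem T_smul_eq_zero_iff (k : ℤ) (m : M) : (T k : R[T;T⁻¹]) • m = 0 ↔ m = 0 := by
  refine ⟨fun h => ?_, fun h => by rw [h, smul_zero]⟩
  rw [← T_neg_smul_T_smul (R := R) k m, h, smul_zero]

theorem T_max_smul_mem_iSup_nonpos [Module R M] (𝒩 : ℤ → Submodule R M)
    (hT : ∀ (k j : ℤ) (x : M), x ∈ 𝒩 j → (T k : R[T;T⁻¹]) • x ∈ 𝒩 (j - k))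
    {j : ℤ} {x : M} (hx : x ∈ 𝒩 j) :
    (T (max j 0) : R[T;T⁻¹]) • x ∈ ⨆ i ≤ (0 : ℤ), 𝒩 i := by
  have hle : j - max j 0 ≤ 0 := by omega
  exact Submodule.mem_iSup_of_mem _ (Submodule.mem_iSup_of_mem hle (hT _ j x hx))

variable {P : Type} [AddCommGroup P] [Module R[X] P] {ι : P →ₗ[R[X]] M}
  {μ : R[T;T⁻¹] ⊗[R[X]] P →ₗ[R[X]] M} (hμ : ∀ (a : R[T;T⁻¹]) (p : P), μ (a ⊗ₜ p) = a • ι p)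
include hμ

theorem injective_of_tmul_eq_smul (hι : Function.Injective ι) : Function.Injective μ := by
  rw [injective_iff_map_eq_zero]
  intro z hz
  obtain ⟨n, p, rfl⟩ := exists_eq_T_neg_tmul z
  rw [hμ, T_smul_eq_zero_iff, ← map_zero ι] at hz
  rw [hι hz, tmul_zero]

theorem mem_range_of_T_smul_eq (k : ℤ) {m : M} {p : P} (hp : ι p = (T k : R[T;T⁻¹]) • m) :
    m ∈ LinearMap.range μ :=
  ⟨T (-k) ⊗ₜ p, by rw [hμ, hp, T_neg_smul_T_smul]⟩

end Module

end LaurentPolynomial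

theorem laurent_tensor_nonpositive_part_iso_general
    (R : Type) [CommRing R]
    (M : Type) [AddCommGroup M] [Module (LaurentPolynomial R) M]
    [Module R M]
    (𝒩 : ℤ → Submodule R M)
    (hinternal : DirectSum.IsInternal 𝒩)
    (hT : ∀ (k j : ℤ) (x : M), x ∈ 𝒩 j → ((LaurentPolynomial.T k : LaurentPolynomial R)) • x ∈ 𝒩 (j - k))
    -- `P`, together with the `R[t]`-linear injection `ι`, is the non-positive part
    -- `M_{≤0} = ⊕_{j ≤ 0} M_j` of `M`:
    (P : Type) [AddCommGroup P] [Module (Polynomial R) P]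
    (ι : P →ₗ[Polynomial R] M)
    (hinj : Function.Injective ι)
    (hrange : ∀ m : M, (∃ p : P, ι p = m) ↔ m ∈ ⨆ j ≤ (0 : ℤ), 𝒩 j)
    -- `μ` is the multiplication map `R[t,t⁻¹] ⊗_{R[t]} M_{≤0} → M`, `a ⊗ n ↦ a·n`:
    (μ : TensorProduct (Polynomial R) (LaurentPolynomial R) P →ₗ[Polynomial R] M)
    (hμ : ∀ (a : LaurentPolynomial R) (p : P), μ (a ⊗ₜ[Polynomial R] p) = a • ι p) :
    Function.Bijective μ := by
  refine ⟨injective_of_tmul_eq_smul hμ hinj, fun m => ?_⟩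
  have hm : m ∈ ⨆ j, 𝒩 j := hinternal.submodule_iSup_eq_top ▸ Submodule.mem_top
  refine Submodule.iSup_induction 𝒩 (motive := (· ∈ LinearMap.range μ)) hm ?_ (zero_mem _)
    (fun _ _ => add_mem)
  intro j x hx
  obtain ⟨p, hp⟩ := (hrange _).mpr (T_max_smul_mem_iSup_nonpos 𝒩 hT hx)
  exact mem_range_of_T_smul_eq hμ _ hp

/-- Let `R` be a commutative ring and `M` a `ℤ`-graded module over the
`ℤ`-graded ring `R[t,t⁻¹]` (with `t` in degree `-1`, so `T k` has degree `-k` and maps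
`M_j` to `M_{j-k}`).  Let `P` (with an `R[t]`-linear embedding `ι : P ↪ M`) be the
non-positively graded part `M_{≤0} = ⊕_{j ≤ 0} M_j` of `M`, viewed as an `R[t]`-module.
Then the natural multiplication map `R[t,t⁻¹] ⊗_{R[t]} M_{≤0} → M`, `a ⊗ n ↦ a·n`,
is an isomorphism. -/
theorem laurent_tensor_nonpositive_part_iso
    (R : Type) [CommRing R]
    (M : Type) [AddCommGroup M] [Module (LaurentPolynomial R) M]
    [Module R M] [IsScalarTower R (LaurentPolynomial R) M]
    (𝒩 : ℤ → Submodule R M)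
    (hinternal : DirectSum.IsInternal 𝒩)
    (hT : ∀ (k j : ℤ) (x : M), x ∈ 𝒩 j → ((LaurentPolynomial.T k : LaurentPolynomial R)) • x ∈ 𝒩 (j - k))
    -- `P`, together with the `R[t]`-linear injection `ι`, is the non-positive part
    -- `M_{≤0} = ⊕_{j ≤ 0} M_j` of `M`:
    (P : Type) [AddCommGroup P] [Module (Polynomial R) P]
    (ι : P →ₗ[Polynomial R] M)
    (hinj : Function.Injective ι)
    (hrange : ∀ m : M, (∃ p : P, ι p = m) ↔ m ∈ ⨆ j ≤ (0 : ℤ), 𝒩 j)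
    -- `μ` is the multiplication map `R[t,t⁻¹] ⊗_{R[t]} M_{≤0} → M`, `a ⊗ n ↦ a·n`:
    (μ : TensorProduct (Polynomial R) (LaurentPolynomial R) P →ₗ[Polynomial R] M)
    (hμ : ∀ (a : LaurentPolynomial R) (p : P), μ (a ⊗ₜ[Polynomial R] p) = a • ι p) :
    Function.Bijective μ :=
  laurent_tensor_nonpositive_part_iso_general R M 𝒩 hinternal hT P ι hinj hrange μ hμ
end

section
/- Let R be a commutative ring, E a finitely generated projective R-module of rank r, s ∈ E Koszul-regular, and Y = Spec(R/I) with I the image of contraction with s. The dg algebra A[t⁻¹] = Λ•E* ⊗ R[t,t⁻¹] (with d(f) = t·ιₛ(f), E* in bidegree (1,−1), t in bidegree (2,−1)) contains, in each fixed internal degree −k, a complex isomorphic to the Koszul complex of s shifted by 2k; consequently the projection A[t⁻¹] → (R/I)[t,t⁻¹] sending tᵏ·R to tᵏ·(R/I) and all positive exterior powers to 0 is a map of dg algebras and a quasi-isomorphism. -/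
/-! Degreewise in `t`, the differential of `A[t⁻¹]` is the Koszul differential `δ = ιₛ` and the
projection is the augmentation `ε : Λ•E* → R/I`. Koszul-regularity, together with `δ² = 0` and
`ε ∘ δ = 0`, says exactly that `ker δ ∩ ker ε = im δ`. Since `t` is a unit, `dL` has the kernel and
image of `δ ⊗ id`, and since `R[t,t⁻¹]` is flat over `R` the equality `ker ∩ ker = im` survives
tensoring with it. -/

open Module TensorProduct

/-- The projection `A[t⁻¹] = Λ•E* ⊗ R[t,t⁻¹] → (R/I)[t,t⁻¹]` sending `tᵏ·R` to
`tᵏ·(R/I)` and all positive exterior powers to `0`, as a map of `R`-algebras. -/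
noncomputable def koszulProjection (R : Type) [CommRing R]
    (E : Type) [AddCommGroup E] [Module R E] (s : E) :
    TensorProduct R (ExteriorAlgebra R (Dual R E)) (LaurentPolynomial R) →ₐ[R]
      TensorProduct R (R ⧸ Ideal.span (Set.range fun f : Dual R E => f s))
        (LaurentPolynomial R) :=
  Algebra.TensorProduct.map
    ((Ideal.Quotient.mkₐ R (Ideal.span (Set.range fun f : Dual R E => f s))).comp
      (ExteriorAlgebra.algebraMapInv))
    (AlgHom.id R (LaurentPolynomial R))

open LinearMap in
theorem LinearMap.ker_rTensor_inf_ker_rTensor {R M N P Q L : Type*} [CommRing R]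
    [AddCommGroup M] [AddCommGroup N] [AddCommGroup P] [AddCommGroup Q] [AddCommGroup L]
    [Module R M] [Module R N] [Module R P] [Module R Q] [Module R L] [Module.Flat R L]
    {f : M →ₗ[R] N} {g : N →ₗ[R] P} {h : N →ₗ[R] Q} (hfgh : ker g ⊓ ker h = range f) :
    ker (g.rTensor L) ⊓ ker (h.rTensor L) = range (f.rTensor L) := by
  have hexact : Function.Exact (f.rTensor L) ((g.prod h).rTensor L) :=
    Module.Flat.rTensor_exact L (exact_iff.mpr (by rw [ker_prod, hfgh]))
  have hprod : (TensorProduct.prodLeft R R P Q L).toLinearMap ∘ₗ (g.prod h).rTensor L =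
      (g.rTensor L).prod (h.rTensor L) := by
    ext m l <;> simp
  rw [← ker_prod, ← hprod, LinearEquiv.ker_comp, ← exact_iff.mp hexact]

theorem TensorProduct.ker_map_linearEquiv_right {R M N P Q : Type*} [CommRing R]
    [AddCommGroup M] [AddCommGroup N] [AddCommGroup P] [AddCommGroup Q]
    [Module R M] [Module R N] [Module R P] [Module R Q] (f : M →ₗ[R] N) (e : P ≃ₗ[R] Q) :
    LinearMap.ker (map f e.toLinearMap) = LinearMap.ker (f.rTensor P) := by
  rw [← LinearMap.lTensor_comp_rTensor, LinearMap.ker_comp_of_ker_eq_bot]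
  exact LinearMap.ker_eq_bot.mpr (e.lTensor N).injective

theorem TensorProduct.range_map_linearEquiv_right {R M N P Q : Type*} [CommRing R]
    [AddCommGroup M] [AddCommGroup N] [AddCommGroup P] [AddCommGroup Q]
    [Module R M] [Module R N] [Module R P] [Module R Q] (f : M →ₗ[R] N) (e : P ≃ₗ[R] Q) :
    LinearMap.range (map f e.toLinearMap) = LinearMap.range (f.rTensor Q) := by
  rw [← LinearMap.rTensor_comp_lTensor, LinearMap.range_comp_of_range_eq_top]
  exact LinearMap.range_eq_top.mpr (e.lTensor M).surjective

namespace ExteriorAlgebra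

variable {R M : Type*} [CommRing R] [AddCommGroup M] [Module R M] (d : Module.Dual R M)

theorem algebraMapInv_contractLeft_mem (x : ExteriorAlgebra R M) :
    algebraMapInv (CliffordAlgebra.contractLeft d x) ∈ Ideal.span (Set.range d) := by
  induction x using CliffordAlgebra.left_induction with
  | algebraMap r => simp [CliffordAlgebra.contractLeft_algebraMap]
  | add x y hx hy => rw [map_add, map_add]; exact Ideal.add_mem _ hx hy
  | ι_mul x m _ =>
    rw [CliffordAlgebra.contractLeft_ι_mul, map_sub, map_smul, map_mul]
    have hι : algebraMapInv (CliffordAlgebra.ι (0 : QuadraticForm R M) m) = 0 := by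
      simp [algebraMapInv]
    rw [hι, zero_mul, sub_zero, smul_eq_mul]
    exact Ideal.mul_mem_right _ _ (Ideal.subset_span ⟨m, rfl⟩)

theorem smul_one_mem_range_contractLeft {r : R} (hr : r ∈ Ideal.span (Set.range d)) :
    r • (1 : ExteriorAlgebra R M) ∈ LinearMap.range (CliffordAlgebra.contractLeft d) := by
  refine (Ideal.span_le.mpr ?_ : _ ≤ (LinearMap.range (CliffordAlgebra.contractLeft d)).comap
    (LinearMap.toSpanSingleton R (ExteriorAlgebra R M) 1)) hr
  rintro _ ⟨m, rfl⟩
  exact ⟨ι R m, by simp [CliffordAlgebra.contractLeft_ι, Algebra.algebraMap_eq_smul_one]⟩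

theorem ker_contractLeft_inf_ker_augmentation
    (hreg : LinearMap.ker (CliffordAlgebra.contractLeft (Q := 0) d) =
      LinearMap.range (CliffordAlgebra.contractLeft (Q := 0) d) ⊔
        Submodule.span R {(1 : ExteriorAlgebra R M)}) :
    LinearMap.ker (CliffordAlgebra.contractLeft (Q := 0) d) ⊓
        LinearMap.ker ((Ideal.Quotient.mkₐ R (Ideal.span (Set.range d))).comp
          algebraMapInv).toLinearMap =
      LinearMap.range (CliffordAlgebra.contractLeft (Q := 0) d) := by
  refine le_antisymm ?_ ?_
  · rintro a ⟨hδ, hε⟩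
    rw [SetLike.mem_coe, hreg] at hδ
    obtain ⟨_, ⟨b, rfl⟩, _, hr, rfl⟩ := Submodule.mem_sup.mp hδ
    obtain ⟨r, rfl⟩ := Submodule.mem_span_singleton.mp hr
    rw [SetLike.mem_coe, LinearMap.mem_ker, AlgHom.toLinearMap_apply, AlgHom.comp_apply,
      Ideal.Quotient.mkₐ_eq_mk, Ideal.Quotient.eq_zero_iff_mem] at hε
    have hr : r ∈ Ideal.span (Set.range d) := by
      simpa using Ideal.sub_mem _ hε (algebraMapInv_contractLeft_mem d b)
    exact Submodule.add_mem _ ⟨b, rfl⟩ (smul_one_mem_range_contractLeft d hr)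
  · rintro _ ⟨b, rfl⟩
    exact ⟨CliffordAlgebra.contractLeft_contractLeft d b,
      Ideal.Quotient.eq_zero_iff_mem.mpr (algebraMapInv_contractLeft_mem d b)⟩

end ExteriorAlgebra

section Koszul

variable (R : Type) [CommRing R] (E : Type) [AddCommGroup E] [Module R E] (s : E)

noncomputable def koszulAugmentation :
    ExteriorAlgebra R (Dual R E) →ₗ[R] R ⧸ Ideal.span (Set.range fun f : Dual R E => f s) :=
  ((Ideal.Quotient.mkₐ R _).comp ExteriorAlgebra.algebraMapInv).toLinearMap

theorem koszulProjection_toLinearMap :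
    (koszulProjection R E s).toLinearMap = (koszulAugmentation R E s).rTensor _ := rfl

theorem localizedKoszulDualDiff_eq_map :
    localizedKoszulDualDiff R E s = TensorProduct.map (koszulContraction R E s)
      ((LaurentPolynomial.isUnit_T 1).unit.mulLeftLinearEquiv R _).toLinearMap := rfl

theorem ker_localizedKoszulDualDiff_inf_ker_koszulProjection
    (hreg : LinearMap.ker (koszulContraction R E s) =
      LinearMap.range (koszulContraction R E s) ⊔
        Submodule.span R {(1 : ExteriorAlgebra R (Dual R E))}) :
    LinearMap.ker (localizedKoszulDualDiff R E s) ⊓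
        LinearMap.ker (koszulProjection R E s).toLinearMap =
      LinearMap.range (localizedKoszulDualDiff R E s) := by
  rw [localizedKoszulDualDiff_eq_map, TensorProduct.ker_map_linearEquiv_right,
    TensorProduct.range_map_linearEquiv_right, koszulProjection_toLinearMap]
  exact LinearMap.ker_rTensor_inf_ker_rTensor
    (ExteriorAlgebra.ker_contractLeft_inf_ker_augmentation (Dual.eval R E s) hreg)

theorem exists_cocycle_koszulProjection_eq
    (y : (R ⧸ Ideal.span (Set.range fun f : Dual R E => f s)) ⊗[R] LaurentPolynomial R) :
    ∃ x, localizedKoszulDualDiff R E s x = 0 ∧ koszulProjection R E s x = y := by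
  obtain ⟨z, rfl⟩ := LinearMap.rTensor_surjective (LaurentPolynomial R)
    (g := (Ideal.Quotient.mkₐ R _).toLinearMap) (Ideal.Quotient.mkₐ_surjective R _) y
  refine ⟨(Algebra.linearMap R (ExteriorAlgebra R (Dual R E))).rTensor _ z, ?_, ?_⟩
  · rw [localizedKoszulDualDiff, ← LinearMap.comp_apply, LinearMap.map_comp_rTensor]
    have hδι : koszulContraction R E s ∘ₗ Algebra.linearMap R _ = 0 :=
      LinearMap.ext_ring (CliffordAlgebra.contractLeft_algebraMap (Q := 0) (Dual.eval R E s) 1)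
    rw [hδι, TensorProduct.map_zero_left, LinearMap.zero_apply]
  · rw [← AlgHom.toLinearMap_apply, koszulProjection_toLinearMap, ← LinearMap.comp_apply,
      ← LinearMap.rTensor_comp]
    congr 2
    ext
    simp [koszulAugmentation]

end Koszul

theorem koszul_projection_dg_quasi_iso_general
    (R : Type) [CommRing R]
    (E : Type) [AddCommGroup E] [Module R E]
    (s : E)
    (hreg : LinearMap.ker (koszulContraction R E s) =
      LinearMap.range (koszulContraction R E s) ⊔
        Submodule.span R {(1 : ExteriorAlgebra R (Dual R E))}) :
    -- the projection intertwines the differentials (the target has zero differential):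
    ((koszulProjection R E s).toLinearMap).comp (localizedKoszulDualDiff R E s) = 0 ∧
    -- quasi-isomorphism onto the cohomology `(R/I)[t,t⁻¹]`:
    (∀ y, ∃ x, localizedKoszulDualDiff R E s x = 0 ∧ koszulProjection R E s x = y) ∧
    (∀ x, localizedKoszulDualDiff R E s x = 0 →
      (koszulProjection R E s x = 0 ↔ x ∈ LinearMap.range (localizedKoszulDualDiff R E s))) := by
  have hexact := ker_localizedKoszulDualDiff_inf_ker_koszulProjection R E s hreg
  have hproj_dL (z) : koszulProjection R E s (localizedKoszulDualDiff R E s z) = 0 :=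
    (Submodule.mem_inf.mp (hexact.ge ⟨z, rfl⟩)).2
  refine ⟨LinearMap.ext hproj_dL, exists_cocycle_koszulProjection_eq R E s,
    fun x hx => ⟨fun h0 => hexact.le (Submodule.mem_inf.mpr ⟨hx, h0⟩), ?_⟩⟩
  rintro ⟨z, rfl⟩
  exact hproj_dL z

/-- Let `R` be a commutative ring, `E` a finitely generated projective
`R`-module of rank `r`, `s ∈ E` Koszul-regular (encoded, via the contraction operator
`δ = ιₛ` on `Λ•E*`, by `ker δ = range δ ⊔ R·1`: the Koszul complex of `s` is a resolution
of `R/I`), and `I` the image of contraction with `s`.  The projection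
`A[t⁻¹] = Λ•E* ⊗ R[t,t⁻¹] → (R/I)[t,t⁻¹]` (an algebra homomorphism, so the kernel — the
positive exterior-degree part — is an ideal) is a map of dg algebras: it intertwines the
differential `dL` of `A[t⁻¹]` with the zero differential of `(R/I)[t,t⁻¹]`; and it is a
quasi-isomorphism: it is surjective on cocycles (indeed surjective) and a cocycle maps to
`0` iff it is a coboundary. -/
theorem koszul_projection_dg_quasi_iso
    (R : Type) [CommRing R]
    (E : Type) [AddCommGroup E] [Module R E] [Module.Finite R E] [Module.Projective R E]
    (s : E)
    (hreg : LinearMap.ker (koszulContraction R E s) =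
      LinearMap.range (koszulContraction R E s) ⊔
        Submodule.span R {(1 : ExteriorAlgebra R (Dual R E))}) :
    -- the projection intertwines the differentials (the target has zero differential):
    ((koszulProjection R E s).toLinearMap).comp (localizedKoszulDualDiff R E s) = 0 ∧
    -- quasi-isomorphism onto the cohomology `(R/I)[t,t⁻¹]`:
    (∀ y, ∃ x, localizedKoszulDualDiff R E s x = 0 ∧ koszulProjection R E s x = y) ∧
    (∀ x, localizedKoszulDualDiff R E s x = 0 →
      (koszulProjection R E s x = 0 ↔ x ∈ LinearMap.range (localizedKoszulDualDiff R E s))) :=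
  koszul_projection_dg_quasi_iso_general R E s hreg
end
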